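/- Let G be a weighted directed graph with no negative cycle and with exactly k negative edges, let h ≥ 1, and let H be an h-hop reducer for G, meaning V_G ⊆ V_H and for all s,t ∈ V_G and all η ∈ ℕ: d_G(s,t) ≤ d_H^{⌈η/h⌉}(s,t) ≤ d_G^{η}(s,t). Then for all s,t ∈ V_G, d_H^{⌈k/h⌉}(s,t) = d_G(s,t). -/

import Mathlib

/-- A weighted directed graph: a finite vertex type `V`, an edge relation, and
real-valued edge lengths. -/
structure WDigraph (V : Type*) where
  Edge : V → V → Prop
  len : V → V → ℝ

namespace WDigraph

variable {V : Type*}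

/-- `p` is a walk from `s` to `t`: a nonempty list of vertices starting at `s`,
ending at `t`, whose consecutive pairs are edges.  The one-vertex list `[s]` is
the empty walk from `s` to `s`. -/
def IsWalk (G : WDigraph V) (s t : V) (p : List V) : Prop :=
  p ≠ [] ∧ p.head? = some s ∧ p.getLast? = some t ∧ p.Chain' G.Edge

/-- The length of a walk: the sum of the lengths of its edges, counted with
multiplicity (the empty walk has length 0). -/
noncomputable def walkLen (G : WDigraph V) (p : List V) : ℝ :=
  ((p.zip p.tail).map fun q => G.len q.1 q.2).sum

/-- The number of hops of a walk: its traversals of negative edges, counted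
with multiplicity. -/
noncomputable def hops (G : WDigraph V) (p : List V) : ℕ :=
  ((p.zip p.tail).filter fun q => decide (G.len q.1 q.2 < 0)).length

/-- The distance `d(s,t)`: the infimum in `ℝ ∪ {±∞}` of the lengths of all
walks from `s` to `t` (equal to `+∞` when no walk exists). -/
noncomputable def dist (G : WDigraph V) (s t : V) : EReal :=
  sInf {x : EReal | ∃ p, G.IsWalk s t p ∧ x = (G.walkLen p : EReal)}

/-- The `h`-hop distance `d^h(s,t)`: the infimum in `ℝ ∪ {±∞}` of the lengths
of walks from `s` to `t` with at most `h` hops. -/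
noncomputable def hopDist (G : WDigraph V) (h : ℕ) (s t : V) : EReal :=
  sInf {x : EReal | ∃ p, G.IsWalk s t p ∧ G.hops p ≤ h ∧ x = (G.walkLen p : EReal)}

/-- A negative cycle: a walk of negative length from a vertex to itself. -/
def HasNegCycle (G : WDigraph V) : Prop :=
  ∃ v p, G.IsWalk v v p ∧ G.walkLen p < 0

/-- Reweighting the graph by a potential `φ`:
`ℓ_φ(u,v) = φ(u) + ℓ(u,v) − φ(v)`. -/
noncomputable def reweight (G : WDigraph V) (φ : V → ℝ) : WDigraph V :=
  ⟨G.Edge, fun u v => φ u + G.len u v - φ v⟩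

/-- A potential `φ` is valid if `ℓ_φ(e) ≥ 0` for every edge `e` with
`ℓ(e) ≥ 0`. -/
def Valid (G : WDigraph V) (φ : V → ℝ) : Prop :=
  ∀ u v, G.Edge u v → 0 ≤ G.len u v → 0 ≤ φ u + G.len u v - φ v

end WDigraph

/-- Ceiling division `⌈a / b⌉` on natural numbers. -/
def natCeilDiv (a b : ℕ) : ℕ := (a + b - 1) / b


namespace WDigraph

variable {V : Type*} (G : WDigraph V)

lemma walkLen_nil' : G.walkLen [] = 0 := by simp [walkLen]

lemma walkLen_singleton (x : V) : G.walkLen [x] = 0 := by simp [walkLen]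

lemma walkLen_cons_cons (x y : V) (r : List V) :
    G.walkLen (x :: y :: r) = G.len x y + G.walkLen (y :: r) := by
  simp [walkLen]

lemma walkLen_split (a : List V) (v : V) (b : List V) :
    G.walkLen (a ++ v :: b) = G.walkLen (a ++ [v]) + G.walkLen (v :: b) := by
  induction a with
  | nil => simp [walkLen_singleton]
  | cons x a' ih =>
    cases a' with
    | nil => simp [walkLen_cons_cons, walkLen_singleton]
    | cons y a'' =>
      simp only [List.cons_append, walkLen_cons_cons] at *
      rw [ih]; ring

lemma chain'_pairs : ∀ {p : List V}, p.Chain' G.Edge →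
    ∀ ab ∈ p.zip p.tail, G.Edge ab.1 ab.2
  | [], _ => by simp
  | [x], _ => by simp
  | x :: y :: r, h => by
    replace h := List.isChain_cons_cons.mp h
    intro ab hab
    simp only [List.tail_cons, List.zip_cons_cons, List.mem_cons] at hab
    rcases hab with rfl | hab
    · exact h.1
    · exact chain'_pairs h.2 ab hab

lemma nodup_zip_tail : ∀ {p : List V}, p.Nodup → (p.zip p.tail).Nodup
  | [], _ => by simp
  | [x], _ => by simp
  | x :: y :: r, h => by
    simp only [List.tail_cons, List.zip_cons_cons, List.nodup_cons]
    rw [List.nodup_cons] at h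
    exact ⟨fun hmem => h.1 (List.of_mem_zip hmem).1, nodup_zip_tail h.2⟩

lemma exists_dup_split {p : List V} (h : ¬ p.Nodup) :
    ∃ (xs : List V) (v : V) (ys zs : List V), p = xs ++ v :: ys ++ v :: zs := by
  induction p with
  | nil => simp at h
  | cons x r ih =>
    rw [List.nodup_cons] at h
    push_neg at h
    by_cases hx : x ∈ r
    · obtain ⟨ys, zs, rfl⟩ := List.append_of_mem hx
      exact ⟨[], x, ys, zs, rfl⟩
    · obtain ⟨xs, v, ys, zs, rfl⟩ := ih (h hx)
      exact ⟨x :: xs, v, ys, zs, rfl⟩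

lemma exists_nodup_walk (hG : ¬ G.HasNegCycle) :
    ∀ p : List V, p.Chain' G.Edge → ∃ q : List V, q.Nodup ∧ q.Chain' G.Edge ∧
      q.head? = p.head? ∧ q.getLast? = p.getLast? ∧ G.walkLen q ≤ G.walkLen p := by
  suffices H : ∀ (n : ℕ) (p : List V), p.length = n → p.Chain' G.Edge →
      ∃ q : List V, q.Nodup ∧ q.Chain' G.Edge ∧
        q.head? = p.head? ∧ q.getLast? = p.getLast? ∧ G.walkLen q ≤ G.walkLen p by
    exact fun p hc => H p.length p rfl hc
  intro n
  induction n using Nat.strong_induction_on with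
  | _ n ih =>
  intro p hn hc
  subst hn
  by_cases hnd : p.Nodup
  · exact ⟨p, hnd, hc, rfl, rfl, le_refl _⟩
  · obtain ⟨xs, v, ys, zs, rfl⟩ := exists_dup_split hnd
    have hre : xs ++ v :: ys ++ v :: zs = xs ++ ((v :: ys) ++ (v :: zs)) := by simp
    rw [hre] at hc
    have h1 := List.isChain_append.mp hc
    have h2 := List.isChain_append.mp h1.2.1
    -- the removed cycle
    set C : List V := (v :: ys) ++ [v] with hC
    have hCchain : C.Chain' G.Edge := by
      refine List.isChain_append.mpr ⟨h2.1, List.isChain_singleton v, ?_⟩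
      intro x hx y hy
      simp only [List.head?_cons, Option.mem_def, Option.some.injEq] at hy
      subst hy
      exact h2.2.2 x hx v (by simp)
    have hCwalk : G.IsWalk v v C := by
      refine ⟨by simp [hC], by simp [hC], ?_, hCchain⟩
      rw [hC, List.getLast?_append_of_ne_nil _ (by simp)]
      simp
    have hC0 : 0 ≤ G.walkLen C :=
      le_of_not_gt fun hlt => hG ⟨v, C, hCwalk, hlt⟩
    -- the shortcut walk
    set q₀ : List V := xs ++ v :: zs with hq₀
    have hq₀chain : q₀.Chain' G.Edge := by
      refine List.isChain_append.mpr ⟨h1.1, h2.2.1, ?_⟩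
      intro x hx y hy
      simp only [List.head?_cons, Option.mem_def, Option.some.injEq] at hy
      subst hy
      exact h1.2.2 x hx v (by simp)
    have hlen : G.walkLen q₀ ≤ G.walkLen (xs ++ v :: ys ++ v :: zs) := by
      have e1 : G.walkLen (xs ++ v :: ys ++ v :: zs)
          = G.walkLen (xs ++ [v]) + G.walkLen (v :: (ys ++ v :: zs)) := by
        simpa using G.walkLen_split xs v (ys ++ v :: zs)
      have e2 : G.walkLen (v :: (ys ++ v :: zs))
          = G.walkLen ((v :: ys) ++ [v]) + G.walkLen (v :: zs) := by
        simpa using G.walkLen_split (v :: ys) v zs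
      have e3 : G.walkLen q₀ = G.walkLen (xs ++ [v]) + G.walkLen (v :: zs) :=
        G.walkLen_split xs v zs
      rw [e1, e2, e3, ← hC]
      linarith
    have hlt : q₀.length < (xs ++ v :: ys ++ v :: zs).length := by
      simp [hq₀]
    obtain ⟨q, hqnd, hqc, hqh, hqlast, hqlen⟩ := ih q₀.length hlt q₀ rfl hq₀chain
    refine ⟨q, hqnd, hqc, ?_, ?_, hqlen.trans hlen⟩
    · rw [hqh]
      cases xs <;> simp [hq₀]
    · rw [hqlast, hq₀, List.getLast?_append_of_ne_nil _ (by simp), hre,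
        List.getLast?_append_of_ne_nil _ (by simp),
        List.getLast?_append_of_ne_nil _ (by simp)]

lemma hops_le_ncard [Fintype V] {p : List V} (hnd : p.Nodup) (hc : p.Chain' G.Edge) :
    G.hops p ≤ {e : V × V | G.Edge e.1 e.2 ∧ G.len e.1 e.2 < 0}.ncard := by
  classical
  set S := {e : V × V | G.Edge e.1 e.2 ∧ G.len e.1 e.2 < 0} with hS
  set l := (p.zip p.tail).filter fun q => decide (G.len q.1 q.2 < 0) with hl
  have hln : l.Nodup := (nodup_zip_tail hnd).filter _
  have hsub : (↑l.toFinset : Set (V × V)) ⊆ S := by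
    intro ab hab
    simp only [Finset.coe_sort_coe, List.coe_toFinset, Set.mem_setOf_eq] at hab
    have h1 := List.mem_filter.mp hab
    exact ⟨G.chain'_pairs hc ab h1.1, by simpa using h1.2⟩
  have : l.length ≤ S.ncard := by
    calc l.length = l.toFinset.card := (List.toFinset_card_of_nodup hln).symm
    _ = (↑l.toFinset : Set (V × V)).ncard := (Set.ncard_coe_finset _).symm
    _ ≤ S.ncard := Set.ncard_le_ncard hsub (Set.toFinite S)
  exact this

lemma hopDist_le_dist [Fintype V] (hG : ¬ G.HasNegCycle) (k : ℕ)
    (hk : {e : V × V | G.Edge e.1 e.2 ∧ G.len e.1 e.2 < 0}.ncard = k) (s t : V) :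
    G.hopDist k s t ≤ G.dist s t := by
  apply le_sInf
  rintro x ⟨p, hp, rfl⟩
  obtain ⟨q, hnd, hc, hh, hlast, hle⟩ := G.exists_nodup_walk hG p hp.2.2.2
  have hqne : q ≠ [] := by
    intro h0
    rw [h0, hp.2.1] at hh
    simp at hh
  have hq : G.IsWalk s t q := ⟨hqne, hh.trans hp.2.1, hlast.trans hp.2.2.1, hc⟩
  have hb : G.hops q ≤ k := hk ▸ G.hops_le_ncard hnd hc
  exact le_trans (sInf_le ⟨q, hq, hb, rfl⟩) (EReal.coe_le_coe_iff.mpr hle)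

end WDigraph

/-- Let `G` have no negative cycle and exactly `k` negative edges,
let `h ≥ 1`, and let `H` be an `h`-hop reducer for `G` (with `V_G ⊆ V_H` realized by
an injection `ι`): for all `s,t ∈ V_G` and `η ∈ ℕ`,
`d_G(s,t) ≤ d_H^{⌈η/h⌉}(ι s, ι t) ≤ d_G^{η}(s,t)`.  Then
`d_H^{⌈k/h⌉}(ι s, ι t) = d_G(s,t)` for all `s,t ∈ V_G`. -/
theorem hop_reducer_computes_dist {VG VH : Type*} [Fintype VG] [Fintype VH]
    (G : WDigraph VG) (H : WDigraph VH) (hG : ¬ G.HasNegCycle)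
    (k : ℕ) (hk : {e : VG × VG | G.Edge e.1 e.2 ∧ G.len e.1 e.2 < 0}.ncard = k)
    (h : ℕ) (hh : 1 ≤ h)
    (ι : VG → VH) (hι : Function.Injective ι)
    (hred : ∀ (s t : VG) (η : ℕ),
      G.dist s t ≤ H.hopDist (natCeilDiv η h) (ι s) (ι t) ∧
      H.hopDist (natCeilDiv η h) (ι s) (ι t) ≤ G.hopDist η s t) :
    ∀ s t : VG, H.hopDist (natCeilDiv k h) (ι s) (ι t) = G.dist s t := by
  intro s t
  exact le_antisymm ((hred s t k).2.trans (G.hopDist_le_dist hG k hk s t)) (hred s t k).1
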